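/- arXiv:2602.00199 — 3 statements merged into one kernel-verified Lean document; each statement's English description precedes it below -/
import Mathlib

section
/- Let L : R^K → R be smooth and let α : [0,1] → R^K be a smooth curve starting at a minimiser θ* of L with α(0) = θ*, α̇(0) = v, such that γ(t) = (α(t), L(α(t))) is a geodesic on the graph manifold M = {(θ, L(θ))} equipped with the pullback metric G(θ) = I_K + ∇L(θ)∇L(θ)ᵀ. Then the Euclidean arc length of α on [0,1] is at most ‖v‖, and hence ‖α(1) − θ*‖ ≤ ‖v‖ = ‖(θ* + v) − θ*‖. In other words, the Riemannian Laplace sample θ_R = α(1) is no farther from θ* than the Euclidean Laplace sample θ_E = θ* + v. -/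
open scoped RealInnerProductSpace

/-- A geodesic of the Monge (pullback) metric started at a minimiser θ* of L with
initial velocity v travels Euclidean arc length at most ‖v‖, hence the Riemannian
Laplace sample α(1) is no farther from θ* than the Euclidean sample θ* + v. -/
theorem stmt4 {K : ℕ} (L : EuclideanSpace ℝ (Fin K) → ℝ) (hL : ContDiff ℝ (⊤ : ℕ∞) L)
    (θstar : EuclideanSpace ℝ (Fin K)) (hmin : ∀ θ, L θstar ≤ L θ)
    (α α' α'' : ℝ → EuclideanSpace ℝ (Fin K))
    (hα : ∀ t, HasDerivAt α (α' t) t)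
    (hα' : ∀ t, HasDerivAt α' (α'' t) t)
    (hα'cont : Continuous α')
    (v : EuclideanSpace ℝ (Fin K))
    (h0 : α 0 = θstar) (hv : α' 0 = v)
    (hgeo : ∀ t ∈ Set.Icc (0:ℝ) 1,
      α'' t = -(⟪fderiv ℝ (fun θ => gradient L θ) (α t) (α' t), α' t⟫ /
          (1 + ‖gradient L (α t)‖ ^ 2)) • gradient L (α t)) :
    (∫ t in (0:ℝ)..1, ‖α' t‖) ≤ ‖v‖ ∧ ‖α 1 - θstar‖ ≤ ‖v‖ ∧
      ‖v‖ = ‖(θstar + v) - θstar‖ := by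
  set g : EuclideanSpace ℝ (Fin K) → EuclideanSpace ℝ (Fin K) := fun θ => gradient L θ with hg
  -- differentiability of the gradient
  have hgdiff : Differentiable ℝ g := by
    have h1 : ContDiff ℝ (⊤ : ℕ∞) (fderiv ℝ L) := hL.fderiv_right (by simp)
    have : g = (InnerProductSpace.toDual ℝ (EuclideanSpace ℝ (Fin K))).symm ∘ fderiv ℝ L := rfl
    rw [this]
    exact ((InnerProductSpace.toDual ℝ _).symm.contDiff.comp h1).differentiable (by simp)
  -- gradient vanishes at the minimiser
  have hg0 : g θstar = 0 := by
    have h : IsLocalMin L θstar := Filter.Eventually.of_forall hmin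
    simp only [hg, gradient, h.fderiv_eq_zero]
    simp
  -- derivative of t ↦ g (α t)
  have hgα : ∀ t, HasDerivAt (fun t => g (α t)) (fderiv ℝ g (α t) (α' t)) t := fun t =>
    ((hgdiff (α t)).hasFDerivAt).comp_hasDerivAt t (hα t)
  -- the energy function
  set h : ℝ → ℝ := fun t => ⟪g (α t), α' t⟫ with hh
  set E : ℝ → ℝ := fun t => ⟪α' t, α' t⟫ + h t * h t with hE
  have hh' : ∀ t, HasDerivAt h (⟪g (α t), α'' t⟫ + ⟪fderiv ℝ g (α t) (α' t), α' t⟫) t :=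
    fun t => (hgα t).inner ℝ (hα' t)
  have hE' : ∀ t, HasDerivAt E
      ((⟪α' t, α'' t⟫ + ⟪α'' t, α' t⟫) +
        ((⟪g (α t), α'' t⟫ + ⟪fderiv ℝ g (α t) (α' t), α' t⟫) * h t +
          h t * (⟪g (α t), α'' t⟫ + ⟪fderiv ℝ g (α t) (α' t), α' t⟫))) t :=
    fun t => ((hα' t).inner ℝ (hα' t)).add ((hh' t).mul (hh' t))
  -- the energy derivative vanishes on [0,1]
  have hEzero : ∀ t ∈ Set.Icc (0:ℝ) 1, HasDerivAt E 0 t := by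
    intro t ht
    have key := hE' t
    set a : ℝ := ⟪fderiv ℝ g (α t) (α' t), α' t⟫ with ha
    set b : ℝ := ⟪g (α t), α' t⟫ with hb
    set n : ℝ := ‖g (α t)‖ ^ 2 with hn
    have hcc : α'' t = -(a / (1 + n)) • g (α t) := hgeo t ht
    have hpos : (0:ℝ) < 1 + n := by positivity
    have e1 : ⟪α' t, α'' t⟫ = -(a / (1 + n)) * b := by
      rw [hcc, real_inner_smul_right, real_inner_comm]
    have e2 : ⟪α'' t, α' t⟫ = -(a / (1 + n)) * b := by
      rw [hcc, real_inner_smul_left]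
    have e3 : ⟪g (α t), α'' t⟫ = -(a / (1 + n)) * n := by
      rw [hcc, real_inner_smul_right, real_inner_self_eq_norm_sq]
    have hbt : h t = b := rfl
    rw [e1, e2, e3, hbt] at key
    convert key using 1
    field_simp
    ring
  -- E is constant on [0,1]
  have hEconst : ∀ t ∈ Set.Icc (0:ℝ) 1, E t = E 0 := by
    apply constant_of_has_deriv_right_zero
    · exact fun t ht => ((hE' t).continuousAt).continuousWithinAt
    · exact fun t ht => ((hEzero t ⟨ht.1, ht.2.le⟩).hasDerivWithinAt)
  have hE0 : E 0 = ‖v‖ ^ 2 := by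
    simp only [hE, hh, hv, h0, hg0]
    rw [real_inner_self_eq_norm_sq]
    simp [inner_zero_left]
  -- speed bound
  have hspeed : ∀ t ∈ Set.Icc (0:ℝ) 1, ‖α' t‖ ≤ ‖v‖ := by
    intro t ht
    have h1 : ‖α' t‖ ^ 2 ≤ E t := by
      rw [hE]
      simp only [real_inner_self_eq_norm_sq]
      nlinarith [sq_nonneg (h t)]
    rw [hEconst t ht, hE0] at h1
    exact le_of_sq_le_sq h1 (norm_nonneg _)
  -- arc length bound
  have harc : (∫ t in (0:ℝ)..1, ‖α' t‖) ≤ ‖v‖ := by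
    calc (∫ t in (0:ℝ)..1, ‖α' t‖) ≤ ∫ t in (0:ℝ)..1, ‖v‖ := by
          apply intervalIntegral.integral_mono_on zero_le_one
          · exact (hα'cont.norm).intervalIntegrable 0 1
          · exact intervalIntegrable_const
          · exact hspeed
      _ = ‖v‖ := by simp
  refine ⟨harc, ?_, by simp⟩
  have hftc : (∫ t in (0:ℝ)..1, α' t) = α 1 - α 0 :=
    intervalIntegral.integral_eq_sub_of_hasDerivAt (fun t _ => hα t)
      (hα'cont.intervalIntegrable 0 1)
  calc ‖α 1 - θstar‖ = ‖∫ t in (0:ℝ)..1, α' t‖ := by rw [hftc, h0]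
    _ ≤ ∫ t in (0:ℝ)..1, ‖α' t‖ :=
        intervalIntegral.norm_integral_le_integral_norm zero_le_one
    _ ≤ ‖v‖ := harc
end

section
/- Fix c ∈ (0,1), points x₁ ≠ x₂ in R^D, and let x̂ lie on the segment from x₁ to x₂ with d₁ = ‖x̂ − x₁‖ ≤ d₂ = ‖x̂ − x₂‖ and d₁ + d₂ = ‖x₁ − x₂‖. Suppose x̂ is memorised: d₁² ≤ c·d₂². Then there exists a displacement δ along the segment toward x₂ making x̂' = x̂ + δ not memorised (i.e. d₁'² > c·d₂'² and d₂'² > c·d₁'² for d₁' = d₁ + ‖δ‖, d₂' = d₂ − ‖δ‖) if and only if the interval ((√c·d₂ − d₁)/(1+√c), (d₂ − √c·d₁)/(1+√c)) is nonempty and intersects (0, d₂), which holds whenever d₁ < d₂ (strict). -/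
/-!
While `0 < s < d₂` both distances `d₁ + s` and `d₂ - s` stay positive, so the two squared
inequalities are equivalent to `√c (d₂ - s) < d₁ + s` and `√c (d₁ + s) < d₂ - s`. These are
linear in `s` and cut out exactly the open interval of the statement. When `d₁ < d₂` and
`√c < 1` that interval has positive length and meets `(0, d₂)`.
-/

open Set

lemma mul_sq_lt_sq_iff_sqrt_mul_lt {c a b : ℝ} (hc : 0 ≤ c) (ha : 0 ≤ a) (hb : 0 ≤ b) :
    c * b ^ 2 < a ^ 2 ↔ √c * b < a := by
  rw [show c * b ^ 2 = (√c * b) ^ 2 by rw [mul_pow, Real.sq_sqrt hc],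
    pow_lt_pow_iff_left₀ (by positivity) ha two_ne_zero]

lemma dememorised_iff_mem_Ioo {c d₁ d₂ s : ℝ} (hc : 0 ≤ c) (hd₁ : 0 ≤ d₁) (hs : 0 < s)
    (hsd : s < d₂) :
    ((d₁ + s) ^ 2 > c * (d₂ - s) ^ 2 ∧ (d₂ - s) ^ 2 > c * (d₁ + s) ^ 2) ↔
      s ∈ Ioo ((√c * d₂ - d₁) / (1 + √c)) ((d₂ - √c * d₁) / (1 + √c)) := by
  have hpos : 0 < 1 + √c := by positivity
  rw [gt_iff_lt, gt_iff_lt, mul_sq_lt_sq_iff_sqrt_mul_lt hc (by linarith) (by linarith),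
    mul_sq_lt_sq_iff_sqrt_mul_lt hc (by linarith) (by linarith), mem_Ioo,
    div_lt_iff₀ hpos, lt_div_iff₀ hpos]
  constructor <;> rintro ⟨h, h'⟩ <;> constructor <;> linarith

lemma exists_dememorising_shift_iff {c d₁ d₂ : ℝ} (hc : 0 ≤ c) (hd₁ : 0 ≤ d₁) :
    (∃ s : ℝ, 0 < s ∧ s < d₂ ∧
        (d₁ + s) ^ 2 > c * (d₂ - s) ^ 2 ∧ (d₂ - s) ^ 2 > c * (d₁ + s) ^ 2) ↔
      ((√c * d₂ - d₁) / (1 + √c) < (d₂ - √c * d₁) / (1 + √c) ∧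
        (Ioo ((√c * d₂ - d₁) / (1 + √c)) ((d₂ - √c * d₁) / (1 + √c)) ∩
          Ioo 0 d₂).Nonempty) := by
  constructor
  · rintro ⟨s, hs, hsd, hdem⟩
    have hmem := (dememorised_iff_mem_Ioo hc hd₁ hs hsd).1 hdem
    exact ⟨hmem.1.trans hmem.2, s, hmem, hs, hsd⟩
  · rintro ⟨-, s, hmem, hs, hsd⟩
    exact ⟨s, hs, hsd, (dememorised_iff_mem_Ioo hc hd₁ hs hsd).2 hmem⟩

lemma dememorising_window_nonempty {c d₁ d₂ : ℝ} (hc : c < 1) (hd₁ : 0 ≤ d₁)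
    (hlt : d₁ < d₂) :
    (√c * d₂ - d₁) / (1 + √c) < (d₂ - √c * d₁) / (1 + √c) ∧
      (Ioo ((√c * d₂ - d₁) / (1 + √c)) ((d₂ - √c * d₁) / (1 + √c)) ∩
        Ioo 0 d₂).Nonempty := by
  have hr1 : √c < 1 := (Real.sqrt_lt' one_pos).2 (by rwa [one_pow])
  have hpos : 0 < 1 + √c := by positivity
  have hwindow : (√c * d₂ - d₁) / (1 + √c) < (d₂ - √c * d₁) / (1 + √c) := by
    rw [div_lt_div_iff_of_pos_right hpos]
    linarith [mul_pos (sub_pos.2 hr1) (show 0 < d₁ + d₂ by linarith)]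
  refine ⟨hwindow, ?_⟩
  rw [Ioo_inter_Ioo, nonempty_Ioo, max_lt_iff, lt_min_iff, lt_min_iff]
  refine ⟨⟨hwindow, ?_⟩, ?_, by linarith⟩
  · rw [div_lt_iff₀ hpos]
    linarith
  · rw [lt_div_iff₀ hpos]
    linarith [mul_le_mul_of_nonneg_right hr1.le hd₁]

theorem stmt16_general {D : ℕ} (c : ℝ) (hc : c ∈ Set.Ioo (0:ℝ) 1)
    (x₁ xhat : EuclideanSpace ℝ (Fin D))
    (d₁ d₂ : ℝ) (hd₁ : d₁ = ‖xhat - x₁‖) :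
    ((∃ s : ℝ, 0 < s ∧ s < d₂ ∧
        (d₁ + s) ^ 2 > c * (d₂ - s) ^ 2 ∧ (d₂ - s) ^ 2 > c * (d₁ + s) ^ 2) ↔
      ((Real.sqrt c * d₂ - d₁) / (1 + Real.sqrt c) <
          (d₂ - Real.sqrt c * d₁) / (1 + Real.sqrt c) ∧
        (Set.Ioo ((Real.sqrt c * d₂ - d₁) / (1 + Real.sqrt c))
              ((d₂ - Real.sqrt c * d₁) / (1 + Real.sqrt c)) ∩
            Set.Ioo (0:ℝ) d₂).Nonempty)) ∧
    (d₁ < d₂ →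
      ∃ s : ℝ, 0 < s ∧ s < d₂ ∧
        (d₁ + s) ^ 2 > c * (d₂ - s) ^ 2 ∧ (d₂ - s) ^ 2 > c * (d₁ + s) ^ 2) := by
  have hd₁0 : 0 ≤ d₁ := hd₁ ▸ norm_nonneg _
  have hshift := exists_dememorising_shift_iff (d₂ := d₂) hc.1.le hd₁0
  exact ⟨hshift, fun hlt => hshift.2 (dememorising_window_nonempty hc.2 hd₁0 hlt)⟩

/-- Existence version of the margin theorem: for a memorised point x̂ on the
segment from x₁ to x₂ (distances d₁ ≤ d₂), a displacement of length s toward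
x₂ de-memorises x̂ iff the open interval
((√c·d₂ − d₁)/(1+√c), (d₂ − √c·d₁)/(1+√c)) is nonempty and meets (0, d₂);
this holds whenever d₁ < d₂. -/
theorem stmt16 {D : ℕ} (c : ℝ) (hc : c ∈ Set.Ioo (0:ℝ) 1)
    (x₁ x₂ xhat : EuclideanSpace ℝ (Fin D)) (hne : x₁ ≠ x₂)
    (hseg : xhat ∈ segment ℝ x₁ x₂)
    (d₁ d₂ : ℝ) (hd₁ : d₁ = ‖xhat - x₁‖) (hd₂ : d₂ = ‖xhat - x₂‖)
    (hle : d₁ ≤ d₂) (hsum : d₁ + d₂ = ‖x₁ - x₂‖)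
    (hmem : d₁ ^ 2 ≤ c * d₂ ^ 2) :
    ((∃ s : ℝ, 0 < s ∧ s < d₂ ∧
        (d₁ + s) ^ 2 > c * (d₂ - s) ^ 2 ∧ (d₂ - s) ^ 2 > c * (d₁ + s) ^ 2) ↔
      ((Real.sqrt c * d₂ - d₁) / (1 + Real.sqrt c) <
          (d₂ - Real.sqrt c * d₁) / (1 + Real.sqrt c) ∧
        (Set.Ioo ((Real.sqrt c * d₂ - d₁) / (1 + Real.sqrt c))
              ((d₂ - Real.sqrt c * d₁) / (1 + Real.sqrt c)) ∩
            Set.Ioo (0:ℝ) d₂).Nonempty)) ∧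
    (d₁ < d₂ →
      ∃ s : ℝ, 0 < s ∧ s < d₂ ∧
        (d₁ + s) ^ 2 > c * (d₂ - s) ^ 2 ∧ (d₂ - s) ^ 2 > c * (d₁ + s) ^ 2) :=
  stmt16_general c hc x₁ xhat d₁ d₂ hd₁
end

section
/- Let L : R^K → R be smooth. The Christoffel symbols of the Levi-Civita connection of the metric G(θ) = I + ∇L(θ)∇L(θ)ᵀ are Γ^k_{ij}(θ) = (∂_k L(θ) / (1 + ‖∇L(θ)‖²)) · H_{ij}(θ), where H = ∇²L is the Hessian of L; consequently the geodesic equation α̈_k = −Σ_{ij} α̇_i α̇_j Γ^k_{ij} reduces to α̈(t) = −(α̇ᵀH_L(α)α̇)/(1 + ‖∇L(α)‖²)·∇L(α). -/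
open Matrix

/-- Partial derivative ∂ᵢL(θ). -/
noncomputable def pdL {K : ℕ} (L : (Fin K → ℝ) → ℝ) (θ : Fin K → ℝ) (i : Fin K) : ℝ :=
  fderiv ℝ L θ (Pi.single i 1)

/-- Second partial derivative H_{ij}(θ) = ∂ᵢ∂ⱼL(θ) (the Hessian of L). -/
noncomputable def hessL {K : ℕ} (L : (Fin K → ℝ) → ℝ) (θ : Fin K → ℝ)
    (i j : Fin K) : ℝ :=
  fderiv ℝ (fun θ' => pdL L θ' j) θ (Pi.single i 1)

/-- The Monge metric G(θ) = I + ∇L(θ)∇L(θ)ᵀ in coordinates. -/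
noncomputable def mongeG {K : ℕ} (L : (Fin K → ℝ) → ℝ) (θ : Fin K → ℝ) :
    Matrix (Fin K) (Fin K) ℝ :=
  1 + Matrix.vecMulVec (pdL L θ) (pdL L θ)

/-- Christoffel symbols Γ^k_{ij} = ½ Σ_l (G⁻¹)_{kl}(∂ᵢG_{jl} + ∂ⱼG_{li} − ∂ₗG_{ij}). -/
noncomputable def christoffel {K : ℕ} (L : (Fin K → ℝ) → ℝ) (θ : Fin K → ℝ)
    (k i j : Fin K) : ℝ :=
  (1 / 2) * ∑ l, (mongeG L θ)⁻¹ k l *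
    (fderiv ℝ (fun θ' => mongeG L θ' j l) θ (Pi.single i 1) +
     fderiv ℝ (fun θ' => mongeG L θ' l i) θ (Pi.single j 1) -
     fderiv ℝ (fun θ' => mongeG L θ' i j) θ (Pi.single l 1))

lemma pd_smooth {K : ℕ} (L : (Fin K → ℝ) → ℝ) (hL : ContDiff ℝ (⊤ : ℕ∞) L) (i : Fin K) :
    ContDiff ℝ (⊤ : ℕ∞) (fun θ => pdL L θ i) :=
  ((hL.fderiv_right (m := (⊤ : ℕ∞)) le_rfl)).clm_apply contDiff_const

lemma hess_eq {K : ℕ} (L : (Fin K → ℝ) → ℝ) (hL : ContDiff ℝ (⊤ : ℕ∞) L) (θ : Fin K → ℝ) (i j : Fin K) :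
    hessL L θ i j = fderiv ℝ (fderiv ℝ L) θ (Pi.single i 1) (Pi.single j 1) := by
  have hd : DifferentiableAt ℝ (fderiv ℝ L) θ :=
    ((hL.fderiv_right (m := (⊤ : ℕ∞)) le_rfl).differentiable (by simp)) θ
  have := fderiv_clm_apply (c := fderiv ℝ L) (u := fun _ => Pi.single j (1:ℝ)) hd
    (differentiableAt_const _)
  unfold hessL pdL
  rw [this]
  simp

lemma hess_symm {K : ℕ} (L : (Fin K → ℝ) → ℝ) (hL : ContDiff ℝ (⊤ : ℕ∞) L) (θ : Fin K → ℝ)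
    (i j : Fin K) : hessL L θ i j = hessL L θ j i := by
  rw [hess_eq L hL, hess_eq L hL]
  exact (hL.contDiffAt (x := θ)).isSymmSndFDerivAt (by rw [minSmoothness_of_isRCLikeNormedField]; exact WithTop.coe_le_coe.mpr le_top) _ _

lemma fderiv_mongeG {K : ℕ} (L : (Fin K → ℝ) → ℝ) (hL : ContDiff ℝ (⊤ : ℕ∞) L)
    (θ : Fin K → ℝ) (i j l : Fin K) :
    fderiv ℝ (fun θ' => mongeG L θ' j l) θ (Pi.single i 1) =
      hessL L θ i j * pdL L θ l + pdL L θ j * hessL L θ i l := by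
  have hj : DifferentiableAt ℝ (fun θ' => pdL L θ' j) θ :=
    ((pd_smooth L hL j).differentiable (by simp)) θ
  have hl : DifferentiableAt ℝ (fun θ' => pdL L θ' l) θ :=
    ((pd_smooth L hL l).differentiable (by simp)) θ
  have heq : (fun θ' => mongeG L θ' j l) =
      fun θ' => (1 : Matrix (Fin K) (Fin K) ℝ) j l + pdL L θ' j * pdL L θ' l := by
    funext θ'
    simp [mongeG, Matrix.add_apply, Matrix.vecMulVec_apply]
  rw [heq, fderiv_const_add, fderiv_fun_mul hj hl]
  simp [hessL]
  ring

lemma mongeG_inv {K : ℕ} (L : (Fin K → ℝ) → ℝ) (θ : Fin K → ℝ) :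
    (mongeG L θ)⁻¹ = 1 - (1 + ∑ i', (pdL L θ i') ^ 2)⁻¹ •
      Matrix.vecMulVec (pdL L θ) (pdL L θ) := by
  set p := pdL L θ
  set s : ℝ := ∑ i', p i' ^ 2 with hs
  have hs0 : 0 ≤ s := Finset.sum_nonneg fun _ _ => sq_nonneg _
  have hc : (1 + s) ≠ 0 := by positivity
  apply Matrix.inv_eq_right_inv
  have hsq : Matrix.vecMulVec p p * Matrix.vecMulVec p p = s • Matrix.vecMulVec p p := by
    ext a b
    simp [Matrix.mul_apply, Matrix.vecMulVec_apply, Matrix.smul_apply, hs,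
      Finset.sum_mul, Finset.mul_sum]
    congr 1; funext x; ring
  rw [mongeG]
  rw [add_mul, mul_sub, mul_sub, one_mul, one_mul, mul_one, mul_smul_comm, hsq]
  ext a b
  simp [Matrix.add_apply, Matrix.sub_apply, Matrix.smul_apply, smul_smul]
  field_simp
  ring

lemma christoffel_eq {K : ℕ} (L : (Fin K → ℝ) → ℝ) (hL : ContDiff ℝ (⊤ : ℕ∞) L)
    (θ : Fin K → ℝ) (k i j : Fin K) :
    christoffel L θ k i j =
      pdL L θ k / (1 + ∑ i', (pdL L θ i') ^ 2) * hessL L θ i j := by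
  set p := pdL L θ with hp
  set s : ℝ := ∑ i', p i' ^ 2 with hs
  have hs0 : 0 ≤ s := Finset.sum_nonneg fun _ _ => sq_nonneg _
  have hc : (1 + s) ≠ 0 := by positivity
  have hterm : ∀ l : Fin K,
      (fderiv ℝ (fun θ' => mongeG L θ' j l) θ (Pi.single i 1) +
       fderiv ℝ (fun θ' => mongeG L θ' l i) θ (Pi.single j 1) -
       fderiv ℝ (fun θ' => mongeG L θ' i j) θ (Pi.single l 1)) =
      2 * hessL L θ i j * p l := by
    intro l
    rw [fderiv_mongeG L hL, fderiv_mongeG L hL, fderiv_mongeG L hL,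
      hess_symm L hL θ j l, hess_symm L hL θ j i, hess_symm L hL θ l i,
      hess_symm L hL θ l j]
    ring
  have hinv : ∀ l : Fin K, (mongeG L θ)⁻¹ k l =
      (if k = l then (1:ℝ) else 0) - (1 + s)⁻¹ * (p k * p l) := by
    intro l
    rw [mongeG_inv]
    simp [Matrix.sub_apply, Matrix.smul_apply, Matrix.one_apply, Matrix.vecMulVec_apply, hs]
    rfl
  unfold christoffel
  simp only [hterm, hinv]
  rw [Finset.sum_congr rfl (fun l _ => by ring :
    ∀ l ∈ Finset.univ, ((if k = l then (1:ℝ) else 0) - (1 + s)⁻¹ * (p k * p l)) *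
      (2 * hessL L θ i j * p l) =
      (if k = l then (1:ℝ) else 0) * (2 * hessL L θ i j * p l) -
      (1 + s)⁻¹ * p k * (2 * hessL L θ i j) * (p l * p l))]
  rw [Finset.sum_sub_distrib]
  simp only [ite_mul, one_mul, zero_mul]
  rw [Finset.sum_ite_eq Finset.univ k (fun l => 2 * hessL L θ i j * p l)]
  simp only [Finset.mem_univ, if_true]
  rw [← Finset.mul_sum]
  have : ∑ l, p l * p l = s := by
    rw [hs]; exact Finset.sum_congr rfl fun l _ => (sq (p l)).symm
  rw [this]
  field_simp
  ring

/-- The Christoffel symbols of the Monge metric are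
Γ^k_{ij}(θ) = ∂ₖL(θ)/(1+‖∇L(θ)‖²)·H_{ij}(θ), and consequently the geodesic
equation α̈_k = −Σ_{ij} α̇ᵢα̇ⱼΓ^k_{ij} reduces to
α̈ = −(α̇ᵀH_Lα̇)/(1+‖∇L‖²)·∇L. -/
theorem stmt18 {K : ℕ} (L : (Fin K → ℝ) → ℝ) (hL : ContDiff ℝ (⊤ : ℕ∞) L) :
    (∀ (θ : Fin K → ℝ) (k i j : Fin K),
      christoffel L θ k i j =
        pdL L θ k / (1 + ∑ i', (pdL L θ i') ^ 2) * hessL L θ i j) ∧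
    (∀ (α α' α'' : ℝ → (Fin K → ℝ)) (t : ℝ),
      (∀ k, α'' t k =
          -∑ i, ∑ j, α' t i * α' t j * christoffel L (α t) k i j) →
      ∀ k, α'' t k =
        -((∑ i, ∑ j, α' t i * α' t j * hessL L (α t) i j) /
            (1 + ∑ i', (pdL L (α t) i') ^ 2)) * pdL L (α t) k) := by
  refine ⟨fun θ k i j => christoffel_eq L hL θ k i j, ?_⟩
  intro α α' α'' t h k
  rw [h k]
  set c : ℝ := 1 + ∑ i', (pdL L (α t) i') ^ 2
  have : ∀ i j, α' t i * α' t j * christoffel L (α t) k i j =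
      pdL L (α t) k / c * (α' t i * α' t j * hessL L (α t) i j) := by
    intro i j
    rw [christoffel_eq L hL]
    ring
  simp_rw [this, ← Finset.mul_sum]
  ring
end
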